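/- arXiv:0708.0568 — 4 statements merged into one kernel-verified Lean document; each statement's English description precedes it below -/
import Mathlib

section
/- For s > 0 and z, w in the closed right half-plane with z ≠ w and z ≠ w* (where w* = -conj(w)), the kernel satisfies K_s(z,w) = |z - w*|^{-s} · ₂F₁(s/2, 1/2; 1; 1 - |z-w|²/|z-w*|²), where ₂F₁ is the Gauss hypergeometric function. -/
/-!
Write `z = x + iy`, `w = u + iv`. Since `|z - w*|² - |z - w|² = 4xu` and `1 + cos φ = 2 cos² (φ/2)`,
the integrand is `|z - w*|² (1 - ζ cos² (φ/2))` with `ζ = 1 - |z - w|² / |z - w*|² ∈ [0, 1)`.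
Expanding `(1 - ζ cos² (φ/2))^(-s/2)` by the binomial series `∑ (s/2)ₙ/n! ζⁿ cos²ⁿ (φ/2)`,
integrating term by term (the series is dominated by the absolutely convergent `∑ |(s/2)ₙ/n!| ζⁿ`)
and using Wallis' formula `(1/2π) ∫₀^{2π} cos²ⁿ (φ/2) dφ = (1/2)ₙ/n!` produces exactly the
series of `₂F₁(s/2, 1/2; 1; ζ)`.
-/

open Real

/-- The rotation-averaged Riesz `s`-kernel on the right half-plane:
`K_s(z,w) = (1/2π) ∫₀^{2π} (x² + u² - 2xu cos φ + (y-v)²)^{-s/2} dφ`,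
where `z = x + iy`, `w = u + iv`. -/
noncomputable def rotKernel (s : ℝ) (z w : ℂ) : ℝ :=
  (1 / (2 * Real.pi)) * ∫ φ in (0:ℝ)..(2 * Real.pi),
    (z.re ^ 2 + w.re ^ 2 - 2 * z.re * w.re * Real.cos φ + (z.im - w.im) ^ 2) ^ (-(s / 2))

/-- The Gauss hypergeometric function `₂F₁(a,b;c;x)` as a power series
with Pochhammer coefficients. -/
noncomputable def gaussHypergeom (a b c x : ℝ) : ℝ :=
  ∑' n : ℕ, ((ascPochhammer ℝ n).eval a * (ascPochhammer ℝ n).eval b) /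
    ((ascPochhammer ℝ n).eval c * (n.factorial : ℝ)) * x ^ n

theorem ascPochhammer_eval_div_factorial_eq_choose (a : ℝ) (n : ℕ) :
    (ascPochhammer ℝ n).eval a / n.factorial = Ring.choose (a + n - 1) n := by
  rw [← Ring.multichoose_eq, ← Polynomial.ascPochhammer_smeval_eq_eval,
    ← Ring.factorial_nsmul_multichoose_eq_ascPochhammer, nsmul_eq_mul]
  field_simp

theorem hasSum_ascPochhammer_div_factorial_mul_pow (a : ℝ) {x : ℝ} (hx : |x| < 1) :
    HasSum (fun n => (ascPochhammer ℝ n).eval a / n.factorial * x ^ n) ((1 - x) ^ (-a)) := by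
  have hx' : x ∈ Metric.eball (0 : ℝ) 1 := by
    rwa [mem_eball_zero_iff, enorm_eq_ofReal_abs, ENNReal.ofReal_lt_one]
  have := (one_div_one_sub_rpow_hasFPowerSeriesOnBall_zero a).hasSum hx'
  simpa [ascPochhammer_eval_div_factorial_eq_choose, FormalMultilinearSeries.ofScalars_apply_eq,
    mul_comm, rpow_neg (by linarith [abs_lt.1 hx] : (0 : ℝ) ≤ 1 - x)] using this

theorem summable_norm_ascPochhammer_div_factorial_mul_pow (a : ℝ) {x : ℝ} (hx : |x| < 1) :
    Summable (fun n => ‖(ascPochhammer ℝ n).eval a / n.factorial * x ^ n‖) := by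
  have hx' : x ∈ Metric.eball (0 : ℝ) 1 := by
    rwa [mem_eball_zero_iff, enorm_eq_ofReal_abs, ENNReal.ofReal_lt_one]
  have hp := one_div_one_sub_rpow_hasFPowerSeriesOnBall_zero a
  have := FormalMultilinearSeries.summable_norm_apply _ (Metric.eball_subset_eball hp.r_le hx')
  simpa [ascPochhammer_eval_div_factorial_eq_choose, FormalMultilinearSeries.ofScalars_apply_eq,
    mul_comm] using this

theorem integral_cos_pow_two_mul (n : ℕ) :
    ∫ x in 0..π, cos x ^ (2 * n) = π * ((ascPochhammer ℝ n).eval (1 / 2) / n.factorial) := by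
  induction n with
  | zero => simp
  | succ n ih =>
    rw [mul_add_one, integral_cos_pow, ih, sin_pi, sin_zero, ascPochhammer_succ_eval,
      Nat.factorial_succ]
    push_cast
    field_simp
    ring

theorem integral_cos_half_pow_two_mul (n : ℕ) :
    ∫ φ in 0..2 * π, cos (φ / 2) ^ (2 * n) =
      2 * π * ((ascPochhammer ℝ n).eval (1 / 2) / n.factorial) := by
  rw [intervalIntegral.integral_comp_div (fun x => cos x ^ (2 * n)) two_ne_zero, zero_div,
    mul_div_cancel_left₀ π two_ne_zero, integral_cos_pow_two_mul, smul_eq_mul]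
  ring

theorem gaussHypergeom_half_one_eq_average (a : ℝ) {ζ : ℝ} (hζ : |ζ| < 1) :
    gaussHypergeom a (1 / 2) 1 ζ =
      (1 / (2 * π)) * ∫ φ in 0..2 * π, (1 - ζ * cos (φ / 2) ^ 2) ^ (-a) := by
  set c : ℕ → ℝ := fun n => (ascPochhammer ℝ n).eval a / n.factorial
  have hq (φ : ℝ) : |ζ * cos (φ / 2) ^ 2| ≤ |ζ| := by
    rw [abs_mul, abs_sq]
    exact mul_le_of_le_one_right (abs_nonneg ζ) (cos_sq_le_one _)
  have hsum : HasSum (fun n => ∫ φ in 0..2 * π, c n * (ζ * cos (φ / 2) ^ 2) ^ n)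
      (∫ φ in 0..2 * π, (1 - ζ * cos (φ / 2) ^ 2) ^ (-a)) := by
    refine intervalIntegral.hasSum_integral_of_dominated_convergence (fun n _ => ‖c n * ζ ^ n‖)
      (fun n => by fun_prop) (fun n => MeasureTheory.ae_of_all _ fun φ _ => ?_)
      (MeasureTheory.ae_of_all _ fun _ _ => summable_norm_ascPochhammer_div_factorial_mul_pow a hζ)
      intervalIntegrable_const
      (MeasureTheory.ae_of_all _ fun φ _ =>
        hasSum_ascPochhammer_div_factorial_mul_pow a ((hq φ).trans_lt hζ))
    rw [norm_mul, norm_mul, norm_pow, norm_pow]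
    gcongr
    exact hq φ
  have hterm (n : ℕ) : ∫ φ in 0..2 * π, c n * (ζ * cos (φ / 2) ^ 2) ^ n =
      2 * π * (((ascPochhammer ℝ n).eval a * (ascPochhammer ℝ n).eval (1 / 2)) /
        ((ascPochhammer ℝ n).eval 1 * n.factorial) * ζ ^ n) := by
    simp_rw [mul_pow, ← pow_mul, ← mul_assoc]
    rw [intervalIntegral.integral_const_mul, integral_cos_half_pow_two_mul, ascPochhammer_eval_one]
    ring
  rw [← hsum.tsum_eq, tsum_congr hterm, tsum_mul_left, gaussHypergeom]
  field_simp

theorem average_rpow_sq_sub_mul_cos_half_sq (s : ℝ) {r R : ℝ} (hr : 0 < r) (hrR : r ≤ R) :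
    (1 / (2 * π)) * ∫ φ in 0..2 * π, (R ^ 2 - (R ^ 2 - r ^ 2) * cos (φ / 2) ^ 2) ^ (-(s / 2)) =
      R ^ (-s) * gaussHypergeom (s / 2) (1 / 2) 1 (1 - r ^ 2 / R ^ 2) := by
  have hR : 0 < R := hr.trans_le hrR
  have hζ₀ : 0 ≤ 1 - r ^ 2 / R ^ 2 := by
    rw [sub_nonneg, div_le_one (by positivity)]
    gcongr
  have hζ₁ : 1 - r ^ 2 / R ^ 2 < 1 := by
    have : 0 < r ^ 2 / R ^ 2 := by positivity
    linarith
  have hfactor (φ : ℝ) : R ^ 2 - (R ^ 2 - r ^ 2) * cos (φ / 2) ^ 2 =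
      R ^ 2 * (1 - (1 - r ^ 2 / R ^ 2) * cos (φ / 2) ^ 2) := by
    field_simp
  have hbase (φ : ℝ) : 0 ≤ 1 - (1 - r ^ 2 / R ^ 2) * cos (φ / 2) ^ 2 := by
    have := mul_le_of_le_one_right hζ₀ (cos_sq_le_one (φ / 2))
    linarith
  simp_rw [hfactor, mul_rpow (sq_nonneg R) (hbase _), intervalIntegral.integral_const_mul,
    gaussHypergeom_half_one_eq_average _ (abs_lt.2 ⟨by linarith, hζ₁⟩), ← rpow_natCast,
    ← rpow_mul hR.le]
  push_cast
  ring_nf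

theorem Complex.sq_norm_sub_eq (z w : ℂ) :
    ‖z - w‖ ^ 2 = (z.re - w.re) ^ 2 + (z.im - w.im) ^ 2 := by
  rw [Complex.sq_norm, Complex.normSq_apply]
  simp only [Complex.sub_re, Complex.sub_im]
  ring

theorem Complex.sq_norm_sub_neg_conj (z w : ℂ) :
    ‖z - -(starRingEnd ℂ w)‖ ^ 2 = (z.re + w.re) ^ 2 + (z.im - w.im) ^ 2 := by
  rw [Complex.sq_norm_sub_eq, Complex.neg_re, Complex.neg_im, Complex.conj_re, Complex.conj_im]
  ring

theorem Complex.norm_sub_le_norm_sub_neg_conj {z w : ℂ} (hz : 0 ≤ z.re) (hw : 0 ≤ w.re) :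
    ‖z - w‖ ≤ ‖z - -(starRingEnd ℂ w)‖ := by
  refine (pow_le_pow_iff_left₀ (norm_nonneg _) (norm_nonneg _) two_ne_zero).1 ?_
  rw [Complex.sq_norm_sub_eq, Complex.sq_norm_sub_neg_conj]
  nlinarith [mul_nonneg hz hw]

theorem re_sq_add_re_sq_sub_mul_cos_add_im_sq (z w : ℂ) (φ : ℝ) :
    z.re ^ 2 + w.re ^ 2 - 2 * z.re * w.re * cos φ + (z.im - w.im) ^ 2 =
      ‖z - -(starRingEnd ℂ w)‖ ^ 2 -
        (‖z - -(starRingEnd ℂ w)‖ ^ 2 - ‖z - w‖ ^ 2) * cos (φ / 2) ^ 2 := by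
  rw [Complex.sq_norm_sub_neg_conj, Complex.sq_norm_sub_eq, cos_sq, mul_div_cancel₀ φ two_ne_zero]
  ring

theorem rotKernel_hypergeom_repr_general (s : ℝ) (z w : ℂ)
    (hz : 0 ≤ z.re) (hw : 0 ≤ w.re) (hzw : z ≠ w) :
    rotKernel s z w = ‖z - -(starRingEnd ℂ w)‖ ^ (-s) *
      gaussHypergeom (s / 2) (1 / 2) 1
        (1 - ‖z - w‖ ^ 2 / ‖z - -(starRingEnd ℂ w)‖ ^ 2) := by
  simp_rw [rotKernel, re_sq_add_re_sq_sub_mul_cos_add_im_sq]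
  exact average_rpow_sq_sub_mul_cos_half_sq s (norm_pos_iff.2 (sub_ne_zero.2 hzw))
    (Complex.norm_sub_le_norm_sub_neg_conj hz hw)

/-- Hypergeometric representation of the kernel: for `s > 0` and `z,w` in the closed right
half-plane with `z ≠ w` and `z ≠ w* = -conj w`,
`K_s(z,w) = |z-w*|^{-s} ₂F₁(s/2, 1/2; 1; 1 - |z-w|²/|z-w*|²)`. -/
theorem rotKernel_hypergeom_repr (s : ℝ) (hs : 0 < s) (z w : ℂ)
    (hz : 0 ≤ z.re) (hw : 0 ≤ w.re) (hzw : z ≠ w)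
    (hzws : z ≠ -(starRingEnd ℂ w)) :
    rotKernel s z w = ‖z - -(starRingEnd ℂ w)‖ ^ (-s) *
      gaussHypergeom (s / 2) (1 / 2) 1
        (1 - ‖z - w‖ ^ 2 / ‖z - -(starRingEnd ℂ w)‖ ^ 2) :=
  rotKernel_hypergeom_repr_general s z w hz hw hzw
end

section
/- For 0 < s < 1 and w in the open right half-plane (Re w > 0), the diagonal value of the kernel is K_s(w,w) = (Γ(1-s)/Γ(1-s/2)²) · (Re w)^{-s} = 2^{-s}·(Γ((1-s)/2)/(√π·Γ(1-s/2)))·(Re w)^{-s}; in particular K_s(w,w) is finite. -/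
open Real MeasureTheory Set

lemma ofReal_rpow_mul_one_sub_rpow {a b x : ℝ} (hx₀ : 0 ≤ x) (hx₁ : x ≤ 1) :
    ((x ^ (a - 1) * (1 - x) ^ (b - 1) : ℝ) : ℂ)
      = (x : ℂ) ^ ((a : ℂ) - 1) * (1 - (x : ℂ)) ^ ((b : ℂ) - 1) := by
  rw [Complex.ofReal_mul, Complex.ofReal_cpow hx₀, Complex.ofReal_cpow (by linarith)]
  push_cast
  rfl

lemma betaIntegral_ofReal_eq_integral_Ioo (a b : ℝ) :
    Complex.betaIntegral a b = ∫ x in Ioo 0 1, ((x ^ (a - 1) * (1 - x) ^ (b - 1) : ℝ) : ℂ) := by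
  rw [Complex.betaIntegral, intervalIntegral.integral_of_le zero_le_one,
    integral_Ioc_eq_integral_Ioo]
  exact (setIntegral_congr_fun measurableSet_Ioo fun x hx =>
    ofReal_rpow_mul_one_sub_rpow hx.1.le hx.2.le).symm

theorem integrableOn_rpow_mul_one_sub_rpow {a b : ℝ} (ha : 0 < a) (hb : 0 < b) :
    IntegrableOn (fun x : ℝ => x ^ (a - 1) * (1 - x) ^ (b - 1)) (Ioo 0 1) := by
  have h := Complex.betaIntegral_convergent (u := a) (v := b) (by simpa) (by simpa)
  rw [intervalIntegrable_iff_integrableOn_Ioo_of_le zero_le_one] at h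
  exact (h.congr_fun (fun x hx => (ofReal_rpow_mul_one_sub_rpow hx.1.le hx.2.le).symm)
    measurableSet_Ioo).re

theorem integral_rpow_mul_one_sub_rpow {a b : ℝ} (ha : 0 < a) (hb : 0 < b) :
    ∫ x in Ioo 0 1, x ^ (a - 1) * (1 - x) ^ (b - 1) = Gamma a * Gamma b / Gamma (a + b) := by
  have h := Complex.betaIntegral_eq_Gamma_mul_div a b (by simpa) (by simpa)
  rw [betaIntegral_ofReal_eq_integral_Ioo, integral_complex_ofReal, ← Complex.ofReal_add,
    Complex.Gamma_ofReal, Complex.Gamma_ofReal, Complex.Gamma_ofReal] at h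
  exact_mod_cast h

lemma sin_mem_Ioo_of_mem_Ioo {t : ℝ} (ht : t ∈ Ioo 0 (π / 2)) : sin t ∈ Ioo 0 1 := by
  refine ⟨sin_pos_of_pos_of_lt_pi ht.1 (by linarith [ht.2, pi_pos]), ?_⟩
  simpa using strictMonoOn_sin ⟨by linarith [ht.1, pi_pos], ht.2.le⟩
    ⟨by linarith [pi_pos], le_rfl⟩ ht.2

lemma injOn_sin_sq : InjOn (fun t => sin t ^ 2) (Ioo 0 (π / 2)) := by
  intro x hx y hy hxy
  have hsin : sin x = sin y := (pow_left_inj₀ (sin_mem_Ioo_of_mem_Ioo hx).1.le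
    (sin_mem_Ioo_of_mem_Ioo hy).1.le two_ne_zero).1 hxy
  exact injOn_sin ⟨by linarith [hx.1, pi_pos], hx.2.le⟩ ⟨by linarith [hy.1, pi_pos], hy.2.le⟩ hsin

lemma sin_sq_image_Ioo : (fun t => sin t ^ 2) '' Ioo 0 (π / 2) = Ioo 0 1 := by
  refine Subset.antisymm ?_ ?_
  · rintro _ ⟨t, ht, rfl⟩
    obtain ⟨h0, h1⟩ := sin_mem_Ioo_of_mem_Ioo ht
    exact ⟨by positivity, by nlinarith⟩
  · simpa using intermediate_value_Ioo (by positivity : (0:ℝ) ≤ π / 2)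
      ((continuous_sin.pow 2).continuousOn)

lemma abs_deriv_sin_sq_smul_rpow_mul_one_sub_rpow (p : ℝ) {t : ℝ} (ht : t ∈ Ioo 0 (π / 2)) :
    |2 * sin t * cos t| • ((sin t ^ 2) ^ ((p + 1) / 2 - 1) * (1 - sin t ^ 2) ^ ((1 / 2 : ℝ) - 1))
      = 2 * sin t ^ p := by
  have hsin := (sin_mem_Ioo_of_mem_Ioo ht).1
  have hcos : 0 < cos t := cos_pos_of_mem_Ioo ⟨by linarith [ht.1, pi_pos], ht.2⟩
  rw [← cos_sq', ← rpow_two, ← rpow_two, ← rpow_mul hsin.le, ← rpow_mul hcos.le,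
    abs_of_pos (by positivity), smul_eq_mul, show 2 * ((p + 1) / 2 - 1) = p - 1 by ring,
    show (2:ℝ) * (1 / 2 - 1) = -1 by norm_num, rpow_sub_one hsin.ne', rpow_neg_one]
  field_simp

lemma hasDerivWithinAt_sin_sq (u : Set ℝ) (t : ℝ) :
    HasDerivWithinAt (fun t => sin t ^ 2) (2 * sin t * cos t) u t :=
  (((hasDerivAt_sin t).fun_pow 2).congr_deriv (by ring)).hasDerivWithinAt

theorem integrableOn_sin_rpow {p : ℝ} (hp : -1 < p) :
    IntegrableOn (fun t => sin t ^ p) (Ioo 0 (π / 2)) := by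
  have h := integrableOn_rpow_mul_one_sub_rpow (a := (p + 1) / 2) (b := 1 / 2)
    (by linarith) (by norm_num)
  rw [← sin_sq_image_Ioo, integrableOn_image_iff_integrableOn_abs_deriv_smul measurableSet_Ioo
    (fun t _ => hasDerivWithinAt_sin_sq _ t) injOn_sin_sq] at h
  have h2 : IntegrableOn (fun t => 1 / 2 * (2 * sin t ^ p)) (Ioo 0 (π / 2)) :=
    (h.congr_fun (fun t ht => abs_deriv_sin_sq_smul_rpow_mul_one_sub_rpow p ht)
      measurableSet_Ioo).const_mul (1 / 2)
  exact h2.congr_fun (fun t _ => by ring) measurableSet_Ioo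

theorem integral_Ioo_sin_rpow {p : ℝ} (hp : -1 < p) :
    ∫ t in Ioo 0 (π / 2), sin t ^ p = √π * Gamma ((p + 1) / 2) / (2 * Gamma (p / 2 + 1)) := by
  have h := integral_rpow_mul_one_sub_rpow (a := (p + 1) / 2) (b := 1 / 2)
    (by linarith) (by norm_num)
  rw [← sin_sq_image_Ioo, integral_image_eq_integral_abs_deriv_smul measurableSet_Ioo
    (fun t _ => hasDerivWithinAt_sin_sq _ t) injOn_sin_sq,
    setIntegral_congr_fun measurableSet_Ioo
      (fun t ht => abs_deriv_sin_sq_smul_rpow_mul_one_sub_rpow p ht),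
    integral_const_mul, Gamma_one_half_eq, show (p + 1) / 2 + 1 / 2 = p / 2 + 1 by ring] at h
  linear_combination h / 2

theorem integral_sin_rpow {p : ℝ} (hp : -1 < p) :
    ∫ t in 0..π, sin t ^ p = √π * Gamma ((p + 1) / 2) / Gamma (p / 2 + 1) := by
  have hhalf :
      ∫ t in 0..π / 2, sin t ^ p = √π * Gamma ((p + 1) / 2) / (2 * Gamma (p / 2 + 1)) := by
    rw [intervalIntegral.integral_of_le (by positivity), integral_Ioc_eq_integral_Ioo,
      integral_Ioo_sin_rpow hp]
  have hint : IntervalIntegrable (fun t => sin t ^ p) volume 0 (π / 2) :=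
    (intervalIntegrable_iff_integrableOn_Ioo_of_le (by positivity)).2 (integrableOn_sin_rpow hp)
  have hreflect : ∫ t in π / 2..π, sin t ^ p = ∫ t in 0..π / 2, sin t ^ p := by
    simpa [sin_pi_sub, show π - π / 2 = π / 2 by ring] using
      intervalIntegral.integral_comp_sub_left (fun t => sin t ^ p) π (a := π / 2) (b := π)
  have hint' : IntervalIntegrable (fun t => sin t ^ p) volume (π / 2) π := by
    simpa [sin_pi_sub, show π - π / 2 = π / 2 by ring] using (hint.comp_sub_left π).symm
  rw [← intervalIntegral.integral_add_adjacent_intervals hint hint', hreflect, hhalf]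
  ring

theorem rotKernel_self (s : ℝ) {w : ℂ} (hw : 0 ≤ w.re) :
    rotKernel s w w = (2 * w.re) ^ (-s) / π * ∫ t in 0..π, sin t ^ (-s) := by
  have hintegrand : ∀ φ ∈ uIcc 0 (2 * π),
      (w.re ^ 2 + w.re ^ 2 - 2 * w.re * w.re * cos φ + (w.im - w.im) ^ 2) ^ (-(s / 2))
        = (2 * w.re) ^ (-s) * sin (φ / 2) ^ (-s) := by
    intro φ hφ
    rw [uIcc_of_le (by positivity)] at hφ
    have hsin : 0 ≤ sin (φ / 2) :=
      sin_nonneg_of_nonneg_of_le_pi (by linarith [hφ.1]) (by linarith [hφ.2])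
    have hbase : w.re ^ 2 + w.re ^ 2 - 2 * w.re * w.re * cos φ + (w.im - w.im) ^ 2
        = (2 * w.re * sin (φ / 2)) ^ 2 := by
      rw [mul_pow, sin_sq_eq_half_sub, mul_div_cancel₀ _ two_ne_zero]
      ring
    rw [hbase, ← rpow_natCast_mul (by positivity), mul_rpow (by positivity) hsin]
    push_cast
    ring_nf
  rw [rotKernel, intervalIntegral.integral_congr hintegrand, intervalIntegral.integral_const_mul,
    intervalIntegral.integral_comp_div (fun t => sin t ^ (-s)) two_ne_zero]
  field_simp
  ring_nf

theorem Gamma_one_sub_div_Gamma_one_sub_half_sq (s : ℝ) :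
    Gamma (1 - s) / Gamma (1 - s / 2) ^ 2
      = 2 ^ (-s) * (Gamma ((1 - s) / 2) / (√π * Gamma (1 - s / 2))) := by
  have hdup := Gamma_mul_Gamma_add_half ((1 - s) / 2)
  rw [show (1 - s) / 2 + 1 / 2 = 1 - s / 2 by ring, show 2 * ((1 - s) / 2) = 1 - s by ring,
    show 1 - (1 - s) = s by ring] at hdup
  generalize Gamma (1 - s / 2) = G at hdup ⊢
  rcases eq_or_ne G 0 with hG | hG
  · simp [hG]
  have h2 : (2 : ℝ) ^ (-s) * 2 ^ s = 1 := by rw [← rpow_add two_pos]; simp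
  rw [eq_div_of_mul_eq hG hdup]
  field_simp
  linear_combination (-Gamma (1 - s)) * h2

theorem rotKernel_diagonal_general (s : ℝ) (hs1 : s < 1) (w : ℂ) (hw : 0 < w.re) :
    rotKernel s w w
        = Real.Gamma (1 - s) / (Real.Gamma (1 - s / 2)) ^ 2 * w.re ^ (-s) ∧
    rotKernel s w w
        = (2 : ℝ) ^ (-s) * (Real.Gamma ((1 - s) / 2)
            / (Real.sqrt Real.pi * Real.Gamma (1 - s / 2))) * w.re ^ (-s) := by
  have hval : rotKernel s w w = 2 ^ (-s) * (Gamma ((1 - s) / 2) / (√π * Gamma (1 - s / 2)))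
      * w.re ^ (-s) := by
    rw [rotKernel_self s hw.le, integral_sin_rpow (by linarith), mul_rpow two_pos.le hw.le,
      show (-s + 1) / 2 = (1 - s) / 2 by ring, show -s / 2 + 1 = 1 - s / 2 by ring]
    field_simp
    rw [sq_sqrt pi_pos.le]
  exact ⟨by rw [hval, Gamma_one_sub_div_Gamma_one_sub_half_sq], hval⟩

/-- Diagonal value of the kernel: for `0 < s < 1` and `Re w > 0`,
`K_s(w,w) = Γ(1-s)/Γ(1-s/2)² (Re w)^{-s} = 2^{-s} Γ((1-s)/2)/(√π Γ(1-s/2)) (Re w)^{-s}`. -/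
theorem rotKernel_diagonal (s : ℝ) (hs0 : 0 < s) (hs1 : s < 1) (w : ℂ) (hw : 0 < w.re) :
    rotKernel s w w
        = Real.Gamma (1 - s) / (Real.Gamma (1 - s / 2)) ^ 2 * w.re ^ (-s) ∧
    rotKernel s w w
        = (2 : ℝ) ^ (-s) * (Real.Gamma ((1 - s) / 2)
            / (Real.sqrt Real.pi * Real.Gamma (1 - s / 2))) * w.re ^ (-s) :=
  rotKernel_diagonal_general s hs1 w hw
end

section
/- Let 0 < s < 1 and let K denote a continuous symmetric kernel on a compact set A with unique equilibrium measure λ (minimizing the energy J[ν] = ∬K dν dν over probability measures on A) whose potential W^λ(z) = ∫K(z,w)dλ(w) satisfies W^λ ≥ J[λ] on A and W^λ ≤ J[λ] on supp λ. If there exist a subset B ⊆ A, a probability measure ν on B, and a point z ∈ A such that K(z,w) > ∫_B K(w,w')dν(w') for every w ∈ supp λ, then z ∉ supp λ. -/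
open MeasureTheory

/-- The topological support of a measure: points all of whose neighborhoods
have positive measure. -/
def msupport (μ : Measure ℂ) : Set ℂ := {x | ∀ U ∈ nhds x, 0 < μ U}

lemma msupport_compl_null (μ : Measure ℂ) : μ (msupport μ)ᶜ = 0 := by
  apply measure_null_of_locally_null
  intro x hx
  simp only [msupport, Set.mem_compl_iff, Set.mem_setOf_eq, not_forall] at hx
  obtain ⟨U, hU, hU0⟩ := hx
  exact ⟨U, nhdsWithin_le_nhds hU, by simpa using hU0⟩

lemma msupport_closed (μ : Measure ℂ) : IsClosed (msupport μ) := by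
  rw [← isOpen_compl_iff, isOpen_iff_mem_nhds]
  intro x hx
  simp only [msupport, Set.mem_compl_iff, Set.mem_setOf_eq, not_forall] at hx
  obtain ⟨U, hU, hU0⟩ := hx
  have hU0' : μ U = 0 := by simpa using hU0
  filter_upwards [interior_mem_nhds.2 hU] with y hy
  intro hyS
  have := hyS U (mem_interior_iff_mem_nhds.1 hy)
  simp [hU0'] at this

/-- Abstract exclusion criterion (3-point lemma, abstract form). Let `K` be a continuous
symmetric kernel on a compact set `A`, and `lam` the equilibrium measure on `A`
(minimizing the energy among probability measures on `A`) whose potential `W` satisfies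
`W ≥ J` on `A` and `W ≤ J` on `supp lam`, `J` being the energy of `lam`. If there are a
subset `B ⊆ A`, a probability measure `ν` on `B`, and `z ∈ A` such that
`K(z,w) > ∫_B K(w,w') dν(w')` for every `w ∈ supp lam`, then `z ∉ supp lam`. -/
theorem exclusion_criterion (K : ℂ → ℂ → ℝ) (A B : Set ℂ) (hA : IsCompact A)
    (hBA : B ⊆ A)
    (hKc : ContinuousOn (fun p : ℂ × ℂ => K p.1 p.2) (A ×ˢ A))
    (hKsym : ∀ z ∈ A, ∀ w ∈ A, K z w = K w z)
    (lam ν : Measure ℂ) [IsProbabilityMeasure lam] [IsProbabilityMeasure ν]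
    (hlamA : msupport lam ⊆ A) (hνB : msupport ν ⊆ B)
    (J : ℝ) (hJ : J = ∫ z, ∫ w, K z w ∂lam ∂lam)
    (hmin : ∀ μ : Measure ℂ, IsProbabilityMeasure μ → msupport μ ⊆ A →
      J ≤ ∫ z, ∫ w, K z w ∂μ ∂μ)
    (huniq : ∀ μ : Measure ℂ, IsProbabilityMeasure μ → msupport μ ⊆ A →
      (∫ z, ∫ w, K z w ∂μ ∂μ) = J → μ = lam)
    (W : ℂ → ℝ) (hW : ∀ z, W z = ∫ w, K z w ∂lam)
    (h1 : ∀ z ∈ A, J ≤ W z) (h2 : ∀ z ∈ msupport lam, W z ≤ J)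
    (z : ℂ) (hzA : z ∈ A)
    (hdom : ∀ w ∈ msupport lam, (∫ w', K w w' ∂ν) < K z w) :
    z ∉ msupport lam := by
  intro hz
  set S := msupport lam with hSdef
  set T := msupport ν with hTdef
  have hTA : T ⊆ A := fun x hx => hBA (hνB hx)
  have hSc : IsCompact S := hA.of_isClosed_subset (msupport_closed lam) hlamA
  have hTc : IsCompact T := hA.of_isClosed_subset (msupport_closed ν) hTA
  have hlamS : ∀ᵐ w ∂lam, w ∈ S := by
    rw [Filter.eventually_iff, mem_ae_iff]; exact msupport_compl_null lam
  have hνT : ∀ᵐ w ∂ν, w ∈ T := by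
    rw [Filter.eventually_iff, mem_ae_iff]; exact msupport_compl_null ν
  have hlamr : lam.restrict S = lam := Measure.restrict_eq_self_of_ae_mem hlamS
  have hνr : ν.restrict T = ν := Measure.restrict_eq_self_of_ae_mem hνT
  -- integrability of kernel on product
  have hKprod : Integrable (fun p : ℂ × ℂ => K p.1 p.2) (lam.prod ν) := by
    have : IntegrableOn (fun p : ℂ × ℂ => K p.1 p.2) (S ×ˢ T) (lam.prod ν) :=
      (hKc.mono (Set.prod_mono hlamA hTA)).integrableOn_compact (hSc.prod hTc)
    rw [IntegrableOn, ← Measure.prod_restrict, hlamr, hνr] at this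
    exact this
  -- f w = ∫ K w w' dν is integrable w.r.t. lam
  have hf_int : Integrable (fun w => ∫ w', K w w' ∂ν) lam := by
    have := hKprod.integral_prod_left
    simpa using this
  -- g w = K z w is integrable w.r.t. lam
  have hg_int : Integrable (fun w => K z w) lam := by
    rw [← hlamr]
    apply ContinuousOn.integrableOn_compact hSc
    have hcont : ContinuousOn (fun w => K z w) A := by
      have : ContinuousOn (fun w : ℂ => (fun p : ℂ × ℂ => K p.1 p.2) (z, w)) A :=
        hKc.comp (Continuous.continuousOn (by continuity)) (fun w hw => ⟨hzA, hw⟩)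
      exact this
    exact hcont.mono hlamA
  -- key: J ≤ ∫ f dlam
  have hswap : (∫ w, ∫ w', K w w' ∂ν ∂lam) = ∫ w', ∫ w, K w w' ∂lam ∂ν :=
    integral_integral_swap hKprod
  have hWν_int : Integrable (fun w' => ∫ w, K w w' ∂lam) ν := hKprod.integral_prod_right
  have hinner : ∀ᵐ w' ∂ν, J ≤ ∫ w, K w w' ∂lam := by
    filter_upwards [hνT] with w' hw'
    have hw'A : w' ∈ A := hTA hw'
    have : (∫ w, K w w' ∂lam) = ∫ w, K w' w ∂lam := by
      apply integral_congr_ae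
      filter_upwards [hlamS] with w hw
      exact hKsym w (hlamA hw) w' hw'A
    rw [this, ← hW w']
    exact h1 w' hw'A
  have hJle : J ≤ ∫ w, ∫ w', K w w' ∂ν ∂lam := by
    rw [hswap]
    calc J = ∫ _, J ∂ν := by simp
    _ ≤ ∫ w', ∫ w, K w w' ∂lam ∂ν := integral_mono_ae (integrable_const J) hWν_int hinner
  -- and ∫ g dlam = W z ≤ J
  have hgle : (∫ w, K z w ∂lam) ≤ J := by rw [← hW z]; exact h2 z hz
  -- strict comparison
  have hlt : ∀ᵐ w ∂lam, (∫ w', K w w' ∂ν) < K z w := by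
    filter_upwards [hlamS] with w hw using hdom w hw
  have hd_int : Integrable (fun w => K z w - ∫ w', K w w' ∂ν) lam := hg_int.sub hf_int
  have hd_nonneg : 0 ≤ᵐ[lam] fun w => K z w - ∫ w', K w w' ∂ν := by
    filter_upwards [hlt] with w hw
    simp only [Pi.zero_apply]
    linarith
  have hd_le : (∫ w, (K z w - ∫ w', K w w' ∂ν) ∂lam) ≤ 0 := by
    rw [integral_sub hg_int hf_int]
    linarith
  have hd_zero : (fun w => K z w - ∫ w', K w w' ∂ν) =ᵐ[lam] 0 := by
    rw [← integral_eq_zero_iff_of_nonneg_ae hd_nonneg hd_int]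
    exact le_antisymm hd_le (integral_nonneg_of_ae hd_nonneg)
  have : ∀ᵐ w ∂lam, False := by
    filter_upwards [hlt, hd_zero] with w hw1 hw2
    simp only [Pi.zero_apply] at hw2
    linarith
  obtain ⟨w, hw⟩ := this.exists
  exact hw
end

section
/- Let K be a continuous symmetric kernel on a simple closed continuous curve γ : [0,b] → ℂ extended periodically with period b, such that for each fixed t, the function τ ↦ K(γ(τ), γ(t)) is strictly convex on [t, t+b]. Let A be a compact subset of the curve whose outer boundary S is contained in γ([0,b]), and let λ be the equilibrium measure on A for K (so supp λ ⊆ S, with potential W^λ ≥ V on A and W^λ ≤ V on supp λ, where V is the energy of λ). Then supp λ = S. -/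
/-!
If a point `γ t₀` of `S` were off the support, then, the support being closed and the curve
`b`-periodic, `t₀` lies in a gap `(l, r)` of the parameters of support points, with `γ l`, `γ r`
in the support and every support point of the form `γ s`, `s ∈ [r - b, l]`. For such `s` both
`l` and `r` lie in `[s, s + b]`, so writing `t₀ = c l + d r`, strict convexity of
`τ ↦ K (γ τ) (γ s)` integrated against `λ` (which charges every neighbourhood of a support point)
gives `W (γ t₀) < c W (γ l) + d W (γ r) ≤ V`, contradicting `W ≥ V` on `S`.
-/

open MeasureTheory

open Set Function

lemma msupport_eq_support (μ : Measure ℂ) : msupport μ = μ.support :=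
  ext fun x => (Measure.mem_support_iff_forall x).symm

section Support

variable {X : Type*} [TopologicalSpace X] [MeasurableSpace X] [HereditarilyLindelofSpace X]
  {μ : Measure X}

lemma Continuous.integrable_of_isCompact_support [OpensMeasurableSpace X]
    [IsFiniteMeasureOnCompacts μ]
    {E : Type*} [NormedAddCommGroup E] {f : X → E} (hf : Continuous f)
    (hμ : IsCompact μ.support) : Integrable f μ := by
  have hon : IntegrableOn f μ.support μ :=
    hf.continuousOn.integrableOn_compact' hμ Measure.isClosed_support.measurableSet
  rw [← integrableOn_univ]
  exact hon.congr_set_ae (ae_eq_univ.mpr Measure.measure_compl_support).symm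

lemma integral_lt_integral_of_continuous_of_lt_on_support [NeZero μ] {f g : X → ℝ}
    (hf : Continuous f) (hg : Continuous g) (hfi : Integrable f μ) (hgi : Integrable g μ)
    (hlt : ∀ x ∈ μ.support, f x < g x) : ∫ x, f x ∂μ < ∫ x, g x ∂μ := by
  rw [← sub_pos, ← integral_sub hgi hfi]
  have hnonneg : 0 ≤ᵐ[μ] g - f := by
    filter_upwards [Measure.support_mem_ae] with x hx using sub_nonneg.mpr (hlt x hx).le
  refine (integral_pos_iff_support_of_nonneg_ae hnonneg (hgi.sub hfi)).mpr ?_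
  obtain ⟨x, hx⟩ := μ.nonempty_support (NeZero.ne μ)
  have hopen : IsOpen {y | f y < g y} := isOpen_lt hf hg
  refine ((Measure.mem_support_iff_forall x).mp hx _ (hopen.mem_nhds (hlt x hx))).trans_le
    (measure_mono fun y hy => ?_)
  exact (sub_pos.mpr hy).ne'

end Support

lemma IsClosed.exists_gap {α : Type*} [ConditionallyCompleteLinearOrder α] [TopologicalSpace α]
    [OrderTopology α] {P : Set α} (hP : IsClosed P) {a x c : α} (ha : a ∈ P) (hc : c ∈ P)
    (hax : a ≤ x) (hxc : x ≤ c) (hx : x ∉ P) :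
    ∃ l ∈ P, ∃ r ∈ P, a ≤ l ∧ l < x ∧ x < r ∧ r ≤ c ∧ ∀ t ∈ Ioo l r, t ∉ P := by
  have hL : sSup (P ∩ Icc a x) ∈ P ∩ Icc a x :=
    (hP.inter isClosed_Icc).csSup_mem ⟨a, ha, le_rfl, hax⟩ bddAbove_Icc.inter_of_right
  have hR : sInf (P ∩ Icc x c) ∈ P ∩ Icc x c :=
    (hP.inter isClosed_Icc).csInf_mem ⟨c, hc, hxc, le_rfl⟩ bddBelow_Icc.inter_of_right
  refine ⟨_, hL.1, _, hR.1, hL.2.1, hL.2.2.lt_of_ne (fun h => hx (h ▸ hL.1)),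
    hR.2.1.lt_of_ne (fun h => hx (h ▸ hR.1)), hR.2.2, fun t ht htP => ?_⟩
  rcases le_total t x with htx | hxt
  · exact ht.1.not_ge (le_csSup bddAbove_Icc.inter_of_right ⟨htP, hL.2.1.trans ht.1.le, htx⟩)
  · exact ht.2.not_ge (csInf_le bddBelow_Icc.inter_of_right ⟨htP, hxt, ht.2.le.trans hR.2.2⟩)

lemma Function.Periodic.exists_mem_Icc_of_gap {β : Type*} {f : ℝ → β} {b : ℝ}
    (hf : Periodic f b) (hb : 0 < b) {C : Set β} {l r : ℝ} (hgap : ∀ t ∈ Ioo l r, f t ∉ C)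
    {t : ℝ} (ht : f t ∈ C) : ∃ s ∈ Icc (r - b) l, f s = f t := by
  obtain ⟨s, ⟨hs₁, hs₂⟩, hst⟩ := hf.exists_mem_Ico hb t (r - b)
  rw [sub_add_cancel] at hs₂
  exact ⟨s, ⟨hs₁, not_lt.mp fun hls => hgap s ⟨hls, hs₂⟩ (hst ▸ ht)⟩, hst.symm⟩

lemma Function.Periodic.exists_gap {β : Type*} [TopologicalSpace β] {f : ℝ → β} {b : ℝ}
    (hf : Periodic f b) (hb : 0 < b) (hfc : Continuous f) {C : Set β} (hC : IsClosed C)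
    {t₀ t₁ : ℝ} (ht₀ : f t₀ ∉ C) (ht₁ : f t₁ ∈ C) :
    ∃ l r, f l ∈ C ∧ f r ∈ C ∧ t₀ ∈ Ioo l r ∧
      ∀ x ∈ C ∩ range f, ∃ s ∈ Icc (r - b) l, f s = x := by
  obtain ⟨a, ⟨ha₁, ha₂⟩, hta⟩ := hf.exists_mem_Ico hb t₁ (t₀ - b)
  rw [sub_add_cancel] at ha₂
  have haC : f a ∈ C := hta ▸ ht₁
  obtain ⟨l, hl, r, hr, -, hlt, htr, -, hgap⟩ :=
    (hC.preimage hfc).exists_gap (x := t₀) haC (show f (a + b) ∈ C from (hf a).symm ▸ haC)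
      ha₂.le (by linarith) ht₀
  refine ⟨l, r, hl, hr, ⟨hlt, htr⟩, ?_⟩
  rintro _ ⟨ht, t, rfl⟩
  exact hf.exists_mem_Icc_of_gap hb hgap ht

lemma integral_lt_of_strictConvexOn_curve {X : Type*} [TopologicalSpace X] [MeasurableSpace X]
    [HereditarilyLindelofSpace X] {μ : Measure X} [NeZero μ] {K : X → X → ℝ} {γ : ℝ → X}
    {b : ℝ} (hK : ∀ z, Continuous (K z)) (hint : ∀ z, Integrable (K z) μ)
    (hconv : ∀ t : ℝ, StrictConvexOn ℝ (Icc t (t + b)) fun τ => K (γ τ) (γ t))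
    {l r c d : ℝ} (hlr : l < r) (hc : 0 < c) (hd : 0 < d) (hcd : c + d = 1)
    (hcover : ∀ w ∈ μ.support, ∃ s ∈ Icc (r - b) l, γ s = w) :
    ∫ w, K (γ (c • l + d • r)) w ∂μ < c * ∫ w, K (γ l) w ∂μ + d * ∫ w, K (γ r) w ∂μ := by
  have hcl := (hint (γ l)).const_mul c
  have hdr := (hint (γ r)).const_mul d
  rw [← integral_const_mul, ← integral_const_mul, ← integral_add hcl hdr]
  refine integral_lt_integral_of_continuous_of_lt_on_support (hK _) (by fun_prop) (hint _)
    (hcl.add hdr) fun w hw => ?_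
  obtain ⟨s, hs, rfl⟩ := hcover w hw
  exact (hconv s).2 ⟨hs.2, by linarith [hs.1]⟩ ⟨by linarith [hs.2], by linarith [hs.1]⟩
    hlr.ne hc hd hcd

theorem closed_curve_full_support_general (K : ℂ → ℂ → ℝ) (b : ℝ) (hb : 0 < b) (γ : ℝ → ℂ)
    (hγc : Continuous γ) (hper : ∀ t, γ (t + b) = γ t)
    (hKc : Continuous fun p : ℂ × ℂ => K p.1 p.2)
    (hconv : ∀ t : ℝ, StrictConvexOn ℝ (Set.Icc t (t + b)) fun τ => K (γ τ) (γ t))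
    (A S : Set ℂ) (hSA : S ⊆ A) (hS : S ⊆ γ '' Set.Icc 0 b)
    (lam : Measure ℂ) [IsProbabilityMeasure lam] (hsupp : msupport lam ⊆ S)
    (V : ℝ)
    (W : ℂ → ℝ) (hW : ∀ z, W z = ∫ w, K z w ∂lam)
    (h1 : ∀ z ∈ A, V ≤ W z) (h2 : ∀ z ∈ msupport lam, W z ≤ V) :
    msupport lam = S := by
  rw [msupport_eq_support] at hsupp h2 ⊢
  refine hsupp.antisymm fun z₀ hz₀S => by_contra fun hz₀ => ?_
  obtain ⟨t₀, -, rfl⟩ := hS hz₀S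
  obtain ⟨w, hw⟩ := lam.nonempty_support (NeZero.ne lam)
  obtain ⟨t₁, -, rfl⟩ := hS (hsupp hw)
  obtain ⟨l, r, hl, hr, ht₀, hcover⟩ :=
    Periodic.exists_gap hper hb hγc Measure.isClosed_support hz₀ hw
  have hlr : l < r := ht₀.1.trans ht₀.2
  obtain ⟨c, d, hc, hd, hcd, rfl⟩ : t₀ ∈ openSegment ℝ l r := by rwa [openSegment_eq_Ioo hlr]
  have hK : ∀ z, Continuous (K z) := fun z => hKc.comp (.prodMk_right z)
  have hcompact : IsCompact lam.support := (isCompact_Icc.image hγc).of_isClosed_subset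
    Measure.isClosed_support (hsupp.trans hS)
  have hWlt : W (γ (c • l + d • r)) < c * W (γ l) + d * W (γ r) := by
    simp only [hW]
    exact integral_lt_of_strictConvexOn_curve hK
      (fun z => (hK z).integrable_of_isCompact_support hcompact) hconv hlr hc hd hcd
      fun w hw => hcover w ⟨hw, image_subset_range _ _ (hS (hsupp hw))⟩
  refine (calc W (γ (c • l + d • r))
      _ < c * W (γ l) + d * W (γ r) := hWlt
      _ ≤ c * V + d * V := by gcongr <;> exact h2 _ ‹_›
      _ = V := by rw [← add_mul, hcd, one_mul]
      _ ≤ W (γ (c • l + d • r)) := h1 _ (hSA hz₀S)).false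

/-- Convexity theorem on a closed curve (Theorem 3.1(ii)). Let `γ : [0,b] → ℂ` be a
simple closed continuous curve, extended `b`-periodically, and `K` a continuous symmetric
kernel such that `τ ↦ K(γ(τ), γ(t))` is strictly convex on `[t, t+b]` for each `t`. If
`A` is compact with outer boundary `S ⊆ γ([0,b])`, `S ⊆ A`, and `lam` is the equilibrium
measure on `A` for `K` (supported in `S`, with potential `W ≥ V` on `A` and `W ≤ V` on
`supp lam`, `V` the energy of `lam`), then `supp lam = S`. -/
theorem closed_curve_full_support (K : ℂ → ℂ → ℝ) (b : ℝ) (hb : 0 < b) (γ : ℝ → ℂ)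
    (hγc : Continuous γ) (hper : ∀ t, γ (t + b) = γ t)
    (hsimple : ∀ t₁ ∈ Set.Ico (0:ℝ) b, ∀ t₂ ∈ Set.Ico (0:ℝ) b, γ t₁ = γ t₂ → t₁ = t₂)
    (hKc : Continuous fun p : ℂ × ℂ => K p.1 p.2)
    (hKsym : ∀ z w, K z w = K w z)
    (hconv : ∀ t : ℝ, StrictConvexOn ℝ (Set.Icc t (t + b)) fun τ => K (γ τ) (γ t))
    (A S : Set ℂ) (hA : IsCompact A) (hSA : S ⊆ A) (hS : S ⊆ γ '' Set.Icc 0 b)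
    (lam : Measure ℂ) [IsProbabilityMeasure lam] (hsupp : msupport lam ⊆ S)
    (V : ℝ) (hV : V = ∫ z, ∫ w, K z w ∂lam ∂lam)
    (W : ℂ → ℝ) (hW : ∀ z, W z = ∫ w, K z w ∂lam)
    (h1 : ∀ z ∈ A, V ≤ W z) (h2 : ∀ z ∈ msupport lam, W z ≤ V) :
    msupport lam = S :=
  closed_curve_full_support_general K b hb γ hγc hper hKc hconv A S hSA hS lam hsupp V W hW h1 h2
end
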